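/- arXiv:1807.08580 — 9 statements merged into one kernel-verified Lean document; each statement's English description precedes it below -/
import Mathlib

section
/- If θ and φ are orthogonal orthomorphisms of a group G (meaning g ↦ θ(g)⁻¹·φ(g) is a bijection), then the Latin squares L_θ and L_φ, with (i,j)-entries gᵢ·θ(gⱼ) and gᵢ·φ(gⱼ) respectively, are orthogonal: the map (i,j) ↦ (gᵢ·θ(gⱼ), gᵢ·φ(gⱼ)) is injective on G × G. -/
/-- An orthomorphism of a group `G`. -/
def IsOrthomorphism {G : Type*} [Group G] (θ : G → G) : Prop :=
  Function.Bijective θ ∧ Function.Bijective (fun g => g⁻¹ * θ g)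

theorem injective_mul_prodMk_of_injective_inv_mul {G : Type*} [Group G] {θ φ : G → G}
    (h : Function.Injective fun g => (θ g)⁻¹ * φ g) :
    Function.Injective fun p : G × G => (p.1 * θ p.2, p.1 * φ p.2) := by
  rintro ⟨a, b⟩ ⟨c, d⟩ hac
  obtain ⟨hθ, hφ⟩ := Prod.mk.inj hac
  have hbd : b = d := h <| calc
    (θ b)⁻¹ * φ b = (a * θ b)⁻¹ * (a * φ b) := by group
    _ = (c * θ d)⁻¹ * (c * φ d) := by rw [hθ, hφ]
    _ = (θ d)⁻¹ * φ d := by group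
  subst hbd
  exact Prod.ext (mul_right_cancel hθ) rfl

theorem stmt_2_general {G : Type*} [Group G] (θ φ : G → G)
    (horth : Function.Bijective (fun g => (θ g)⁻¹ * φ g)) :
    Function.Injective (fun p : G × G => (p.1 * θ p.2, p.1 * φ p.2)) :=
  injective_mul_prodMk_of_injective_inv_mul horth.injective

theorem stmt_2 {G : Type*} [Group G] (θ φ : G → G)
    (hθ : IsOrthomorphism θ) (hφ : IsOrthomorphism φ)
    (horth : Function.Bijective (fun g => (θ g)⁻¹ * φ g)) :
    Function.Injective (fun p : G × G => (p.1 * θ p.2, p.1 * φ p.2)) :=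
  stmt_2_general θ φ horth
end

section
/- Let (Gᵢ)_{i∈I} be a family of groups, each with a strong complete mapping φᵢ fixing the identity. Then the componentwise map φ'((gᵢ)ᵢ) = (φᵢ(gᵢ))ᵢ restricts to a strong complete mapping of the direct sum ⊕ᵢ Gᵢ (the subgroup of the product consisting of elements with finite support). -/
/-- A strong complete mapping of a group `G`. -/
def IsStrongCompleteMapping {G : Type*} [Group G] (θ : G → G) : Prop :=
  Function.Bijective θ ∧ Function.Bijective (fun g => g⁻¹ * θ g) ∧
    Function.Bijective (fun g => g * θ g)

/-- The direct sum of a family of groups: the subgroup of the direct product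
consisting of families with all but finitely many coordinates the identity. -/
def directSum {I : Type*} (G : I → Type*) [∀ i, Group (G i)] :
    Subgroup (∀ i, G i) where
  carrier := {f | {i | f i ≠ 1}.Finite}
  one_mem' := by
    simp
  mul_mem' := by
    intro f g hf hg
    refine Set.Finite.subset (hf.union hg) ?_
    intro i hi
    simp only [Set.mem_setOf_eq, Set.mem_union] at *
    by_contra h
    push_neg at h
    exact hi (by simp [Pi.mul_apply, h.1, h.2])
  inv_mem' := by
    intro f hf
    refine Set.Finite.subset hf ?_
    intro i hi
    simp only [Set.mem_setOf_eq] at *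
    exact fun h => hi (by simp [Pi.inv_apply, h])


/-! Each of `φᵢ`, `g ↦ g⁻¹ φᵢ(g)` and `g ↦ g φᵢ(g)` fixes `1`, so applying it coordinatewise
preserves finite support; and a coordinatewise map of surjections fixing `1` is still surjective
on the direct sum, because a preimage of `1` can always be chosen to be `1`. -/

namespace directSum

open Function

variable {I : Type*} {G H : I → Type*} [∀ i, Group (G i)] [∀ i, Group (H i)]
  {σ : ∀ i, G i → H i}

lemma map_mem (hσ : ∀ i, σ i 1 = 1) {f : ∀ i, G i} (hf : f ∈ directSum G) :
    (fun i => σ i (f i)) ∈ directSum H :=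
  Set.Finite.subset hf fun i hi h => hi (by simp only [h, hσ])

def map (σ : ∀ i, G i → H i) (hσ : ∀ i, σ i 1 = 1) (f : directSum G) : directSum H :=
  ⟨fun i => σ i ((f : ∀ i, G i) i), map_mem hσ f.2⟩

@[simp]
lemma coe_map_apply (hσ : ∀ i, σ i 1 = 1) (f : directSum G) (i : I) :
    (map σ hσ f : ∀ i, H i) i = σ i ((f : ∀ i, G i) i) :=
  rfl

lemma map_injective (hσ : ∀ i, σ i 1 = 1) (hinj : ∀ i, Injective (σ i)) :
    Injective (map σ hσ) := fun f g hfg =>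
  Subtype.ext <| funext fun i => hinj i <| by
    simpa only [coe_map_apply] using congrFun (congrArg Subtype.val hfg) i

lemma map_surjective (hσ : ∀ i, σ i 1 = 1) (hsurj : ∀ i, Surjective (σ i)) :
    Surjective (map σ hσ) := by
  classical
  intro g
  let f : ∀ i, G i := fun i => if (g : ∀ i, H i) i = 1 then 1 else surjInv (hsurj i) (g.1 i)
  have hf : f ∈ directSum G :=
    Set.Finite.subset g.2 fun i hi h => hi (by simp only [f, h, if_true])
  refine ⟨⟨f, hf⟩, Subtype.ext <| funext fun i => ?_⟩
  by_cases h : (g : ∀ i, H i) i = 1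
  · simp only [coe_map_apply, f, h, if_true, hσ]
  · simp only [coe_map_apply, f, h, if_false, surjInv_eq]

lemma map_bijective (hσ : ∀ i, σ i 1 = 1) (hbij : ∀ i, Bijective (σ i)) :
    Bijective (map σ hσ) :=
  ⟨map_injective hσ fun i => (hbij i).1, map_surjective hσ fun i => (hbij i).2⟩

lemma isStrongCompleteMapping_map {φ : ∀ i, G i → G i} (hφ : ∀ i, IsStrongCompleteMapping (φ i))
    (hφ1 : ∀ i, φ i 1 = 1) : IsStrongCompleteMapping (map φ hφ1) := by
  have hleft : (fun f => f⁻¹ * map φ hφ1 f) =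
      map (fun i g => g⁻¹ * φ i g) (fun i => by simp only [hφ1, inv_one, one_mul]) := rfl
  have hright : (fun f => f * map φ hφ1 f) =
      map (fun i g => g * φ i g) (fun i => by simp only [hφ1, one_mul]) := rfl
  refine ⟨map_bijective hφ1 fun i => (hφ i).1, ?_, ?_⟩
  · rw [hleft]
    exact map_bijective _ fun i => (hφ i).2.1
  · rw [hright]
    exact map_bijective _ fun i => (hφ i).2.2

end directSum

theorem stmt_4 {I : Type*} (G : I → Type*) [∀ i, Group (G i)]
    (φ : ∀ i, G i → G i) (hφ : ∀ i, IsStrongCompleteMapping (φ i))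
    (hφ1 : ∀ i, φ i 1 = 1) :
    ∃ ψ : directSum G → directSum G,
      (∀ f : directSum G, ∀ i, (ψ f : ∀ i, G i) i = φ i ((f : ∀ i, G i) i)) ∧
        IsStrongCompleteMapping ψ :=
  ⟨directSum.map φ hφ1, fun _ _ => rfl, directSum.isStrongCompleteMapping_map hφ hφ1⟩
end

section
/- Let H be a subgroup of an abelian group G (written additively). If H has a strong complete mapping and the quotient G/H has a strong complete mapping, then G has a strong complete mapping. -/
/-- A strong complete mapping of an additively written abelian group `A`. -/
def IsAddSCM {A : Type*} [AddCommGroup A] (θ : A → A) : Prop :=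
  Function.Bijective θ ∧ Function.Bijective (fun a => θ a - a) ∧
    Function.Bijective (fun a => θ a + a)

/-!
Every `g : G` is uniquely `q.out + h` with `q : G ⧸ H` and `h : H`. Given strong complete
mappings `φ` of `G ⧸ H` and `β` of `H`, set `θ (q.out + h) = (φ q).out + β h`. Then
`θ g ± g = ((φ q).out ± q.out) + (β h ± h)`, where the first summand lifts the bijection
`φ ± id` of `G ⧸ H` and the second is the bijection `β ± id` of `H`; any map of this shape
is a bijection of `G`.
-/

open Function

section Transversal

variable {G : Type*} [AddCommGroup G] {H : AddSubgroup G}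

theorem bijective_add_of_bijective_mk {c : G ⧸ H → G}
    (hc : Bijective fun q => (c q : G ⧸ H)) :
    Bijective fun p : (G ⧸ H) × H => c p.1 + p.2 := by
  have mk_add_coe (q : G ⧸ H) (h : H) : ((c q + h : G) : G ⧸ H) = c q := by
    rw [QuotientAddGroup.mk_add, (QuotientAddGroup.eq_zero_iff _).mpr h.2, add_zero]
  constructor
  · rintro ⟨q₁, h₁⟩ ⟨q₂, h₂⟩ heq
    have hq : q₁ = q₂ := hc.1 <| by simpa only [mk_add_coe] using congrArg (↑· : G → G ⧸ H) heq
    subst hq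
    exact Prod.ext rfl (Subtype.ext (add_left_cancel heq))
  · intro g
    obtain ⟨q, hq⟩ := hc.2 (g : G ⧸ H)
    have hmem : g - c q ∈ H := by
      rw [← QuotientAddGroup.eq_zero_iff, QuotientAddGroup.mk_sub, ← hq, sub_self]
    exact ⟨(q, ⟨g - c q, hmem⟩), add_sub_cancel _ _⟩

theorem bijective_out_add : Bijective fun p : (G ⧸ H) × H => p.1.out + p.2 :=
  bijective_add_of_bijective_mk <| by
    simp only [QuotientAddGroup.out_eq']
    exact bijective_id

theorem bijective_of_apply_out_add {f : G → G} {c : G ⧸ H → G} {β : H → H}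
    (hc : Bijective fun q => (c q : G ⧸ H)) (hβ : Bijective β)
    (hf : ∀ (q : G ⧸ H) (h : H), f (q.out + h) = c q + β h) :
    Bijective f := by
  rw [← Bijective.of_comp_iff f bijective_out_add]
  have hcomp : (f ∘ fun p : (G ⧸ H) × H => p.1.out + p.2) =
      (fun p : (G ⧸ H) × H => c p.1 + p.2) ∘ Prod.map id β :=
    funext fun p => hf p.1 p.2
  rw [hcomp]
  exact (bijective_add_of_bijective_mk hc).comp (bijective_id.prodMap hβ)

end Transversal

theorem stmt_6 {G : Type*} [AddCommGroup G] (H : AddSubgroup G)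
    (hH : ∃ θ : H → H, IsAddSCM θ)
    (hQ : ∃ θ : G ⧸ H → G ⧸ H, IsAddSCM θ) :
    ∃ θ : G → G, IsAddSCM θ := by
  obtain ⟨β, hβ, hβ_sub, hβ_add⟩ := hH
  obtain ⟨φ, hφ, hφ_sub, hφ_add⟩ := hQ
  let T := Equiv.ofBijective _ (bijective_out_add (H := H))
  have hθ (q : G ⧸ H) (h : H) : T (Prod.map φ β (T.symm (q.out + h))) = (φ q).out + β h := by
    rw [Equiv.ofBijective_symm_apply_apply _ bijective_out_add (q, h)]
    rfl
  refine ⟨fun g => T (Prod.map φ β (T.symm g)), ?_, ?_, ?_⟩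
  · exact bijective_of_apply_out_add (by simpa only [QuotientAddGroup.out_eq'] using hφ) hβ hθ
  · refine bijective_of_apply_out_add (c := fun q => (φ q).out - q.out)
      (by simpa only [QuotientAddGroup.mk_sub, QuotientAddGroup.out_eq'] using hφ_sub) hβ_sub ?_
    intro q h
    simp only [hθ, AddSubgroup.coe_sub]
    abel
  · refine bijective_of_apply_out_add (c := fun q => (φ q).out + q.out)
      (by simpa only [QuotientAddGroup.mk_add, QuotientAddGroup.out_eq'] using hφ_add) hβ_add ?_
    intro q h
    simp only [hθ, AddSubgroup.coe_add]
    abel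
end

section
/- Let A be an abelian group (written additively) and θ a strong complete mapping of A. Then the function L : A × A → A defined by L(i,j) = i + θ(j) is a Knut Vic design: for every fixed i the map j ↦ L(i,j) is a bijection, for every fixed j the map i ↦ L(i,j) is a bijection, for every k the map i ↦ L(i, k+i) is a bijection (left diagonals), and for every k the map i ↦ L(i, k−i) is a bijection (right diagonals). -/
section

open Function

variable {A : Type*} [AddCommGroup A] {θ : A → A}

theorem bijective_add_apply_add_left (h : Bijective fun a => θ a + a) (k : A) :
    Bijective fun i => i + θ (k + i) := by
  convert ((Equiv.subRight k).bijective.comp h).comp (Equiv.addLeft k).bijective using 1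
  funext i
  simp only [comp_apply, Equiv.coe_addLeft, Equiv.subRight_apply]
  abel

theorem bijective_add_apply_sub_left (h : Bijective fun a => θ a - a) (k : A) :
    Bijective fun i => i + θ (k - i) := by
  convert ((Equiv.addLeft k).bijective.comp h).comp (Equiv.subLeft k).bijective using 1
  funext i
  simp only [comp_apply, Equiv.coe_addLeft, Equiv.subLeft_apply]
  abel

end

theorem stmt_8 {A : Type*} [AddCommGroup A] (θ : A → A) (hθ : IsAddSCM θ) :
    (∀ i : A, Function.Bijective (fun j : A => i + θ j)) ∧
      (∀ j : A, Function.Bijective (fun i : A => i + θ j)) ∧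
      (∀ k : A, Function.Bijective (fun i : A => i + θ (k + i))) ∧
      (∀ k : A, Function.Bijective (fun i : A => i + θ (k - i))) := by
  obtain ⟨hθ_bij, hθ_sub, hθ_add⟩ := hθ
  exact ⟨fun i => (Equiv.addLeft i).bijective.comp hθ_bij,
    fun j => (Equiv.addRight (θ j)).bijective,
    bijective_add_apply_add_left hθ_add, bijective_add_apply_sub_left hθ_sub⟩
end

section
/- Define a : ℝ → ℝ by a(x) = e^x − 1 for x ≥ 0 and a(x) = −ln(1−x) for x < 0. Then a is a strictly increasing bijection from ℝ to ℝ, and for every d > 0 the map x ↦ a(x+d) − a(x) is a bijection from ℝ to the positive reals (0, ∞). -/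
/-!
Both branches of `a` have derivative `1` at `0`, so `a` is differentiable with derivative
`a' x = e^x` for `x ≥ 0` and `a' x = (1 - x)⁻¹` for `x < 0`. This derivative is positive and
strictly increasing, with `a' → 0` at `-∞` and `a' → ∞` at `+∞`. By the mean value theorem
`d a'(x) < a(x + d) - a(x) < d a'(x + d)`, so the difference `x ↦ a(x + d) - a(x)` is a
continuous, strictly increasing function tending to `0` at `-∞` and to `∞` at `+∞`; by the
intermediate value theorem it is a bijection onto `(0, ∞)`.
-/

open Real in
/-- The directed S∞-terrace for (ℝ, +): `a x = e^x - 1` for `x ≥ 0` and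
`a x = -ln (1 - x)` for `x < 0`. -/
noncomputable def aFun (x : ℝ) : ℝ := if 0 ≤ x then Real.exp x - 1 else -Real.log (1 - x)

open Real Filter Set Topology

theorem Continuous.surjOn_Ioi_of_tendsto {α δ : Type*} [ConditionallyCompleteLinearOrder α]
    [TopologicalSpace α] [OrderTopology α] [DenselyOrdered α] [LinearOrder δ]
    [TopologicalSpace δ] [OrderClosedTopology δ] {f : α → δ} (hf : Continuous f) {a : δ}
    (h_bot : Tendsto f atBot (𝓝 a)) (h_top : Tendsto f atTop atTop) : SurjOn f univ (Ioi a) :=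
  fun y hy =>
    let ⟨x, hx⟩ := mem_range_of_exists_le_of_exists_ge hf
      (h_bot.eventually (eventually_le_nhds hy)).exists
      (h_top.eventually (eventually_ge_atTop y)).exists
    ⟨x, mem_univ x, hx⟩

theorem HasDerivAt.ite_le {f g : ℝ → ℝ} {a f' : ℝ} (hf : HasDerivAt f f' a)
    (hg : HasDerivAt g f' a) (hfg : f a = g a) :
    HasDerivAt (fun x => if a ≤ x then f x else g x) f' a := by
  have h_Ici : HasDerivWithinAt (fun x => if a ≤ x then f x else g x) f' (Ici a) a :=
    hf.hasDerivWithinAt.congr (fun y hy => if_pos hy) (if_pos le_rfl)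
  have h_Iic : HasDerivWithinAt (fun x => if a ≤ x then f x else g x) f' (Iic a) a := by
    refine hg.hasDerivWithinAt.congr (fun y hy => ?_) (by simp [hfg])
    split_ifs with hay
    · rw [le_antisymm hy hay, hfg]
    · rfl
  simpa only [Iic_union_Ici, hasDerivWithinAt_univ] using h_Iic.union h_Ici

section ShiftDifference

variable {f f' : ℝ → ℝ} (hf : ∀ x, HasDerivAt f (f' x) x) (hf' : StrictMono f') {d : ℝ}
include hf hf'

theorem mul_deriv_lt_sub_shift (hd : 0 < d) (x : ℝ) :
    d * f' x < f (x + d) - f x ∧ f (x + d) - f x < d * f' (x + d) := by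
  obtain ⟨c, ⟨hxc, hcx⟩, hc⟩ :=
    exists_hasDerivAt_eq_slope f f' (lt_add_of_pos_right x hd)
      (fun y _ => (hf y).continuousAt.continuousWithinAt) (fun y _ => hf y)
  rw [add_sub_cancel_left, eq_div_iff hd.ne'] at hc
  rw [← hc, mul_comm (f' c)]
  exact ⟨mul_lt_mul_of_pos_left (hf' hxc) hd, mul_lt_mul_of_pos_left (hf' hcx) hd⟩

theorem strictMono_sub_shift (hd : 0 < d) : StrictMono fun x => f (x + d) - f x :=
  strictMono_of_hasDerivAt_pos
    (fun x => (((hf (x + d)).comp_add_const x d)).sub (hf x))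
    (fun x => sub_pos.mpr (hf' (lt_add_of_pos_right x hd)))

theorem tendsto_sub_shift_atTop (hd : 0 < d) (h_top : Tendsto f' atTop atTop) :
    Tendsto (fun x => f (x + d) - f x) atTop atTop :=
  tendsto_atTop_mono (fun x => (mul_deriv_lt_sub_shift hf hf' hd x).1.le)
    (h_top.const_mul_atTop hd)

theorem tendsto_sub_shift_atBot (hd : 0 < d) (h_bot : Tendsto f' atBot (𝓝 0)) :
    Tendsto (fun x => f (x + d) - f x) atBot (𝓝 0) := by
  have h_lower : Tendsto (fun x => d * f' x) atBot (𝓝 0) := by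
    simpa using h_bot.const_mul d
  have h_upper : Tendsto (fun x => d * f' (x + d)) atBot (𝓝 0) :=
    h_lower.comp (tendsto_atBot_add_const_right _ d tendsto_id)
  exact tendsto_of_tendsto_of_tendsto_of_le_of_le h_lower h_upper
    (fun x => (mul_deriv_lt_sub_shift hf hf' hd x).1.le)
    (fun x => (mul_deriv_lt_sub_shift hf hf' hd x).2.le)

end ShiftDifference

noncomputable def aDeriv (x : ℝ) : ℝ := if 0 ≤ x then exp x else (1 - x)⁻¹

theorem hasDerivAt_neg_log_one_sub {x : ℝ} (hx : x < 1) :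
    HasDerivAt (fun y => -log (1 - y)) (1 - x)⁻¹ x := by
  have h := (((hasDerivAt_id x).const_sub 1).log (sub_ne_zero.mpr hx.ne')).neg
  rwa [neg_div, neg_neg, one_div] at h

theorem hasDerivAt_exp_sub_one (x : ℝ) : HasDerivAt (fun y => exp y - 1) (exp x) x :=
  (hasDerivAt_exp x).sub_const 1

theorem hasDerivAt_aFun (x : ℝ) : HasDerivAt aFun (aDeriv x) x := by
  rcases lt_trichotomy x 0 with hx | rfl | hx
  · have h_eq : aFun =ᶠ[𝓝 x] fun y => -log (1 - y) := by
      filter_upwards [eventually_lt_nhds hx] with y hy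
      simp [aFun, not_le.mpr hy]
    rw [aDeriv, if_neg (not_le.mpr hx)]
    exact (hasDerivAt_neg_log_one_sub (hx.trans one_pos)).congr_of_eventuallyEq h_eq
  · have h_neg : HasDerivAt (fun y => -log (1 - y)) (exp 0) 0 := by
      simpa using hasDerivAt_neg_log_one_sub one_pos
    rw [aDeriv, if_pos le_rfl]
    exact (hasDerivAt_exp_sub_one 0).ite_le h_neg (by simp)
  · have h_eq : aFun =ᶠ[𝓝 x] fun y => exp y - 1 := by
      filter_upwards [eventually_gt_nhds hx] with y hy
      simp [aFun, hy.le]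
    rw [aDeriv, if_pos hx.le]
    exact (hasDerivAt_exp_sub_one x).congr_of_eventuallyEq h_eq

theorem aDeriv_pos (x : ℝ) : 0 < aDeriv x := by
  unfold aDeriv
  split_ifs with hx
  · exact exp_pos x
  · exact inv_pos.mpr (by linarith)

theorem aDeriv_strictMono : StrictMono aDeriv := by
  intro x y hxy
  unfold aDeriv
  split_ifs with hx hy hy
  · exact exp_lt_exp.mpr hxy
  · exact absurd (hx.trans hxy.le) hy
  · calc (1 - x)⁻¹ < 1 := inv_lt_one_of_one_lt₀ (by linarith)
      _ ≤ exp y := one_le_exp hy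
  · exact inv_strictAnti₀ (by linarith) (by linarith)

theorem tendsto_aDeriv_atTop : Tendsto aDeriv atTop atTop := by
  refine tendsto_exp_atTop.congr' ?_
  filter_upwards [eventually_ge_atTop 0] with x hx
  simp [aDeriv, hx]

theorem tendsto_aDeriv_atBot : Tendsto aDeriv atBot (𝓝 0) := by
  have h_one_sub : Tendsto (fun x : ℝ => 1 - x) atBot atTop :=
    tendsto_atTop_add_const_left _ 1 tendsto_neg_atBot_atTop
  refine h_one_sub.inv_tendsto_atTop.congr' ?_
  filter_upwards [eventually_lt_atBot 0] with x hx
  simp [aDeriv, not_le.mpr hx]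

theorem aFun_strictMono : StrictMono aFun :=
  strictMono_of_hasDerivAt_pos hasDerivAt_aFun aDeriv_pos

theorem continuous_aFun : Continuous aFun :=
  continuous_iff_continuousAt.mpr fun x => (hasDerivAt_aFun x).continuousAt

theorem tendsto_aFun_atTop : Tendsto aFun atTop atTop := by
  refine (tendsto_atTop_add_const_right _ (-1) tendsto_exp_atTop).congr' ?_
  filter_upwards [eventually_ge_atTop 0] with x hx
  simp [aFun, hx, sub_eq_add_neg]

theorem tendsto_aFun_atBot : Tendsto aFun atBot atBot := by
  have h_one_sub : Tendsto (fun x : ℝ => 1 - x) atBot atTop :=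
    tendsto_atTop_add_const_left _ 1 tendsto_neg_atBot_atTop
  refine (tendsto_neg_atTop_atBot.comp (tendsto_log_atTop.comp h_one_sub)).congr' ?_
  filter_upwards [eventually_lt_atBot 0] with x hx
  simp [aFun, not_le.mpr hx]

theorem stmt_9 :
    StrictMono aFun ∧ Function.Bijective aFun ∧
      ∀ d : ℝ, 0 < d →
        Set.BijOn (fun x => aFun (x + d) - aFun x) Set.univ (Set.Ioi (0 : ℝ)) := by
  refine ⟨aFun_strictMono,
    ⟨aFun_strictMono.injective, continuous_aFun.surjective tendsto_aFun_atTop tendsto_aFun_atBot⟩,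
    fun d hd => ⟨?_, ?_, ?_⟩⟩
  · exact fun x _ => sub_pos.mpr (aFun_strictMono (lt_add_of_pos_right x hd))
  · exact (strictMono_sub_shift hasDerivAt_aFun aDeriv_strictMono hd).injective.injOn
  · exact ((continuous_aFun.comp (continuous_add_const d)).sub continuous_aFun).surjOn_Ioi_of_tendsto
      (tendsto_sub_shift_atBot hasDerivAt_aFun aDeriv_strictMono hd tendsto_aDeriv_atBot)
      (tendsto_sub_shift_atTop hasDerivAt_aFun aDeriv_strictMono hd tendsto_aDeriv_atTop)
end

section
/- Let G be a group, I an index set contained in an ordered field F, and a : I → G a bijection such that for every d ∈ F with d > 0 and I_(d) := {i ∈ I : i + d ∈ I} nonempty, the map a_(d) : I_(d) → G \ {e} given by a_(d)(i) = a(i)⁻¹·a(i+d) is a bijection. Then for each such d and each pair of distinct x, y ∈ G, there exist unique i, j ∈ I with j = i' + d for some i' (i.e., there is a unique pair of positions at horizontal distance d in the Latin square L(a)(i,j) = a(i)⁻¹·a(j)) such that L(a)(i, i') = x and L(a)(i, i'+d) = y; similarly the pair appears exactly once at vertical distance d. That is, L(a) is a Vatican square. -/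
/-!
A pair `(x, y)` at horizontal distance `d` sits in a row `i` at columns `j`, `j + d` exactly when
`a(j)⁻¹ a(j + d) = x⁻¹ y` and `a(i) = a(j) x⁻¹`. Since `x⁻¹ y ≠ 1`, the terrace condition
determines `j ∈ I_(d)` uniquely, and then bijectivity of `a` determines `i`. Vertically, the
condition reads `a(i)⁻¹ a(i + d) = x y⁻¹` and `a(j) = a(i) x`, and the same argument applies.
-/

theorem Set.BijOn.existsUnique_mem_eq {α β : Type*} {f : α → β} {s : Set α} {t : Set β}
    (h : Set.BijOn f s t) {y : β} (hy : y ∈ t) : ∃! x, x ∈ s ∧ f x = y := by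
  obtain ⟨x, hx, rfl⟩ := h.surjOn hy
  exact ⟨x, ⟨hx, rfl⟩, fun x' ⟨hx', hfx'⟩ ↦ h.injOn hx' hx hfx'⟩

theorem existsUnique_prod_of_existsUnique {α β : Type*} {P : α → Prop} {Q : α → β → Prop}
    (hP : ∃! i, P i) (hQ : ∀ i, ∃! j, Q i j) : ∃! p : α × β, P p.1 ∧ Q p.1 p.2 := by
  obtain ⟨i, hi, hi_unique⟩ := hP
  obtain ⟨j, hj, hj_unique⟩ := hQ i
  refine ⟨(i, j), ⟨hi, hj⟩, fun ⟨i', j'⟩ ⟨hi', hj'⟩ ↦ ?_⟩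
  obtain rfl : i' = i := hi_unique i' hi'
  rw [hj_unique j' hj']

section Group

variable {G : Type*} [Group G] {u v w x y : G}

theorem inv_mul_eq_and_inv_mul_eq_iff_same_left :
    u⁻¹ * v = x ∧ u⁻¹ * w = y ↔ v⁻¹ * w = x⁻¹ * y ∧ u = v * x⁻¹ := by
  constructor
  · rintro ⟨rfl, rfl⟩
    constructor <;> group
  · rintro ⟨hvw, rfl⟩
    refine ⟨by group, ?_⟩
    rw [mul_inv_rev, inv_inv, mul_assoc, hvw, ← mul_assoc, mul_inv_cancel, one_mul]

theorem inv_mul_eq_and_inv_mul_eq_iff_same_right :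
    u⁻¹ * w = x ∧ v⁻¹ * w = y ↔ u⁻¹ * v = x * y⁻¹ ∧ w = u * x := by
  constructor
  · rintro ⟨rfl, rfl⟩
    constructor <;> group
  · rintro ⟨huv, rfl⟩
    refine ⟨by group, ?_⟩
    rw [eq_mul_inv_iff_mul_eq.mpr huv.symm]
    group

end Group

theorem stmt_10_general {F : Type*} [Field F] [LinearOrder F] {G : Type*} [Group G]
    (I : Set F) (a : F → G)
    (hbij : Set.BijOn a I Set.univ)
    (hterr : ∀ d : F, 0 < d → ({i ∈ I | i + d ∈ I}).Nonempty →
      Set.BijOn (fun i => (a i)⁻¹ * a (i + d)) {i ∈ I | i + d ∈ I} {g : G | g ≠ 1}) :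
    ∀ d : F, 0 < d → ({i ∈ I | i + d ∈ I}).Nonempty →
      ∀ x y : G, x ≠ y →
        -- the ordered pair (x, y) appears exactly once at distance d in rows
        (∃! p : F × F, p.1 ∈ I ∧ p.2 ∈ I ∧ p.2 + d ∈ I ∧
          (a p.1)⁻¹ * a p.2 = x ∧ (a p.1)⁻¹ * a (p.2 + d) = y) ∧
        -- the ordered pair (x, y) appears exactly once at distance d in columns
        (∃! p : F × F, p.1 ∈ I ∧ p.1 + d ∈ I ∧ p.2 ∈ I ∧
          (a p.1)⁻¹ * a p.2 = x ∧ (a (p.1 + d))⁻¹ * a p.2 = y) := by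
  intro d hd hne x y hxy
  have hterr_d := hterr d hd hne
  have hquot_ne : x⁻¹ * y ≠ 1 := fun h ↦ hxy (inv_mul_eq_one.mp h)
  have hdiv_ne : x * y⁻¹ ≠ 1 := fun h ↦ hxy (mul_inv_eq_one.mp h)
  constructor
  · have hrows := existsUnique_prod_of_existsUnique (hterr_d.existsUnique_mem_eq hquot_ne)
      fun j ↦ hbij.existsUnique_mem_eq (Set.mem_univ (a j * x⁻¹))
    refine ((Equiv.prodComm F F).existsUnique_congr fun p ↦ ?_).mp hrows
    rw [inv_mul_eq_and_inv_mul_eq_iff_same_left]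
    simp only [Set.mem_ofPred_eq]
    tauto
  · have hcols := existsUnique_prod_of_existsUnique (hterr_d.existsUnique_mem_eq hdiv_ne)
      fun i ↦ hbij.existsUnique_mem_eq (Set.mem_univ (a i * x))
    refine (existsUnique_congr fun p ↦ ?_).mp hcols
    rw [inv_mul_eq_and_inv_mul_eq_iff_same_right]
    simp only [Set.mem_ofPred_eq]
    tauto

theorem stmt_10 {F : Type*} [Field F] [LinearOrder F] [IsStrictOrderedRing F] {G : Type*} [Group G]
    (I : Set F) (a : F → G)
    (hbij : Set.BijOn a I Set.univ)
    (hterr : ∀ d : F, 0 < d → ({i ∈ I | i + d ∈ I}).Nonempty →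
      Set.BijOn (fun i => (a i)⁻¹ * a (i + d)) {i ∈ I | i + d ∈ I} {g : G | g ≠ 1}) :
    ∀ d : F, 0 < d → ({i ∈ I | i + d ∈ I}).Nonempty →
      ∀ x y : G, x ≠ y →
        -- the ordered pair (x, y) appears exactly once at distance d in rows
        (∃! p : F × F, p.1 ∈ I ∧ p.2 ∈ I ∧ p.2 + d ∈ I ∧
          (a p.1)⁻¹ * a p.2 = x ∧ (a p.1)⁻¹ * a (p.2 + d) = y) ∧
        -- the ordered pair (x, y) appears exactly once at distance d in columns
        (∃! p : F × F, p.1 ∈ I ∧ p.1 + d ∈ I ∧ p.2 ∈ I ∧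
          (a p.1)⁻¹ * a p.2 = x ∧ (a (p.1 + d))⁻¹ * a p.2 = y) :=
  stmt_10_general I a hbij hterr
end

section
/- Every group G of infinite cardinality κ has a set of κ mutually orthogonal orthomorphisms: there is a family (θ_i)_{i∈I} with |I| = κ of bijections θ_i : G → G such that each map g ↦ g⁻¹·θ_i(g) is a bijection and for all i ≠ j the map g ↦ θ_i(g)⁻¹·θ_j(g) is a bijection. -/
/-!
Encode a partial family by the set `S` of triples `(i, g, y)` with `θ i g = y`, and adjoin the
constant map `1` and the identity as two further members `Θ a`. Then bijectivity of `θ i`, the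
orthomorphism property and orthogonality all say the same thing: `g ↦ (Θ a g)⁻¹ * θ j g` is a
bijection for every member `Θ a ≠ θ j`. Injectivity is a condition on at most four triples, so it
survives unions of chains; surjectivity and totality are `κ` single requirements. A coherent `S`
of size `< κ` meets any one requirement after adding at most two triples, because the points `g`
already used and the values `y` that would repeat a quotient form sets of size `< κ`. Meeting
the requirements one by one along the initial ordinal of `κ` keeps every stage of size `< κ`, and
the union of all stages is the required family.
-/

open Cardinal Set

universe u

lemma Cardinal.mk_biUnion_lt_of_finite {ι α : Type u} {κ : Cardinal.{u}} (hκ : ℵ₀ ≤ κ)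
    {s : Set ι} (hs : #s < κ) {f : ι → Set α} (hf : ∀ i, (f i).Finite) :
    #(⋃ i ∈ s, f i) < κ := by
  rcases s.finite_or_infinite with hfin | hinf
  · exact (mk_lt_aleph0_iff.2 (hfin.biUnion fun i _ => hf i)).trans_le hκ
  · calc #(⋃ i ∈ s, f i) ≤ #s * ℵ₀ :=
          (mk_biUnion_le _ _).trans
            (mul_le_mul_right (ciSup_le' fun i : s => (mk_lt_aleph0_iff.2 (hf i)).le) _)
      _ = #s := by have := hinf.to_subtype; exact mul_aleph0_eq (aleph0_le_mk s)
      _ < κ := hs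

lemma Set.sUnion_image_Iio_accumulate {ι α : Type*} [Preorder ι] (s : ι → Set α) (x : ι) :
    ⋃₀ (accumulate s '' Iio x) = ⋃ y < x, s y := by
  rw [sUnion_image]
  refine (iUnion₂_subset fun y hy => ?_).antisymm
    (biUnion_mono subset_rfl fun _ _ => subset_accumulate)
  rw [accumulate_def]
  exact iUnion₂_subset fun _ hz => subset_biUnion_of_mem (hz.trans_lt hy)

theorem exists_forall_of_finite_extension_of_mk_Iio_lt {α ι : Type u} [LinearOrder ι]
    [WellFoundedLT ι] {κ : Cardinal.{u}} (hκ : ℵ₀ ≤ κ) (hι : ∀ o : ι, #(Iio o) < κ)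
    {P : Set α → Prop} (hP : ∀ c, IsChain (· ⊆ ·) c → (∀ s ∈ c, P s) → P (⋃₀ c))
    {Q : ι → Set α → Prop} (hQ : ∀ o, Monotone (Q o))
    (hext : ∀ o s, P s → #s < κ → ∃ t, t.Finite ∧ P (s ∪ t) ∧ Q o (s ∪ t)) :
    ∃ s, P s ∧ ∀ o, Q o s := by
  have hext' : ∀ o s, ∃ t : Set α, t.Finite ∧ (P s → #s < κ → P (s ∪ t) ∧ Q o (s ∪ t)) := by
    intro o s
    by_cases h : P s ∧ #s < κ
    · obtain ⟨t, ht, hPt, hQt⟩ := hext o s h.1 h.2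
      exact ⟨t, ht, fun _ _ => ⟨hPt, hQt⟩⟩
    · exact ⟨∅, finite_empty, fun hP hs => (h ⟨hP, hs⟩).elim⟩
  choose ext hfin hext using hext'
  -- `step o` is the finite set added at stage `o` to meet requirement `o`
  let step : ι → Set α := wellFounded_lt.fix fun o IH => ext o (⋃ (o' : ι) (h : o' < o), IH o' h)
  have step_eq : ∀ o, step o = ext o (⋃ o' < o, step o') := fun o => wellFounded_lt.fix_eq _ o
  have accumulate_eq : ∀ o, accumulate step o = (⋃ o' < o, step o') ∪ step o := by
    intro o
    simp only [accumulate_def, le_iff_lt_or_eq, iUnion_or, iUnion_union_distrib,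
      iUnion_iUnion_eq_left]
  have accumulate_spec : ∀ o, P (accumulate step o) ∧ Q o (accumulate step o) := by
    intro o
    induction o using WellFoundedLT.induction with
    | _ o IH =>
      have hP' : P (⋃ o' < o, step o') := by
        rw [← sUnion_image_Iio_accumulate]
        refine hP _ (monotone_accumulate.isChain_image (isChain_of_trichotomous _)) ?_
        rintro _ ⟨o', ho', rfl⟩
        exact (IH o' ho').1
      rw [accumulate_eq, step_eq]
      exact hext o _ hP' (mk_biUnion_lt_of_finite hκ (hι o) fun o' => step_eq o' ▸ hfin _ _)
  refine ⟨⋃₀ range (accumulate step), hP _ monotone_accumulate.isChain_range ?_,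
    fun o => hQ o (subset_sUnion_of_mem ⟨o, rfl⟩) (accumulate_spec o).2⟩
  rintro _ ⟨o, rfl⟩
  exact (accumulate_spec o).1

theorem exists_forall_of_finite_extension {α R : Type u} {κ : Cardinal.{u}} (hκ : ℵ₀ ≤ κ)
    (hR : #R ≤ κ) {P : Set α → Prop}
    (hP : ∀ c, IsChain (· ⊆ ·) c → (∀ s ∈ c, P s) → P (⋃₀ c)) {Q : R → Set α → Prop}
    (hQ : ∀ r, Monotone (Q r))
    (hext : ∀ r s, P s → #s < κ → ∃ t, t.Finite ∧ P (s ∪ t) ∧ Q r (s ∪ t)) :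
    ∃ s, P s ∧ ∀ r, Q r s := by
  obtain ⟨e⟩ : Nonempty ((#R).ord.ToType ≃ R) := Cardinal.eq.1 (mk_ord_toType _)
  obtain ⟨s, hPs, hQs⟩ := exists_forall_of_finite_extension_of_mk_Iio_lt hκ
    (fun o => (by simpa using mk_Iio_lt o : #(Iio o) < #R).trans_le hR) hP
    (Q := fun o => Q (e o)) (fun o => hQ (e o)) (fun o => hext (e o))
  exact ⟨s, hPs, fun r => by simpa using hQs (e.symm r)⟩

lemma exists_notMem_of_mk_lt {α : Type u} {A : Set α} (h : #A < #α) : ∃ x, x ∉ A := by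
  by_contra! hA
  exact h.ne (by rw [eq_univ_of_forall hA, mk_univ])

lemma exists_notMem_union_of_mk_lt {α : Type u} [Infinite α] {A B : Set α} (hA : #A < #α)
    (hB : #B < #α) : ∃ x, x ∉ A ∧ x ∉ B := by
  simpa only [mem_union, not_or] using
    exists_notMem_of_mk_lt ((mk_union_le A B).trans_lt (add_lt_of_lt (aleph0_le_mk α) hA hB))

namespace OrthFamily

/-- `one` and `id` stand for the constant map `1` and the identity, `of i` for `θ i`. -/
inductive Index (G : Type u) where
  | one
  | id
  | of (i : G)

def Index.equivOption {G : Type u} : Index G ≃ Option (Option G) where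
  toFun
    | .one => none
    | .id => some none
    | .of i => some (some i)
  invFun
    | none => .one
    | some none => .id
    | some (some i) => .of i
  left_inv a := by cases a <;> rfl
  right_inv o := by rcases o with _ | _ | _ <;> rfl

/-- `inl (i, g)` asks for `θ i g` to be defined, `inr (a, j, w)` for `w` to be a value of
`g ↦ (Θ a g)⁻¹ * θ j g`. -/
abbrev Requirement (G : Type u) : Type u := (G × G) ⊕ (Index G × G × G)

lemma mk_requirement {G : Type u} [Infinite G] : #(Requirement G) = #G := by
  have h := aleph0_le_mk G
  simp [mk_congr Index.equivOption, mk_option, add_one_eq h, mul_eq_self h, add_eq_self h]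

variable {G : Type u}

lemma exists_fresh [Infinite G] {S : Set (G × G × G)} (hS : #S < #G) {A : Set G}
    (hA : #A < #G) : ∃ g ∉ A, ∀ i y, (i, g, y) ∉ S := by
  obtain ⟨g, hgA, hgS⟩ := exists_notMem_union_of_mk_lt hA
    (mk_image_le.trans_lt hS : #((fun t : G × G × G => t.2.1) '' S) < #G)
  exact ⟨g, hgA, fun i y h => hgS ⟨(i, g, y), h, rfl⟩⟩

variable [Group G] {S T : Set (G × G × G)}

/-- The graph of the member `a` of the partial family encoded by the triples `(i, g, θ i g) ∈ S`. -/
def graph (S : Set (G × G × G)) : Index G → Set (G × G)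
  | .one => {p | p.2 = 1}
  | .id => {p | p.2 = p.1}
  | .of i => {p | (i, p) ∈ S}

def diffs (S : Set (G × G × G)) (a b : Index G) : Set G :=
  {w | ∃ g x y, (g, x) ∈ graph S a ∧ (g, y) ∈ graph S b ∧ x⁻¹ * y = w}

structure IsCoherent (S : Set (G × G × G)) : Prop where
  functional : ∀ ⦃i g y y'⦄, (i, g, y) ∈ S → (i, g, y') ∈ S → y = y'
  orthogonal : ∀ ⦃a j g g' x y x' y'⦄, a ≠ .of j → (g, x) ∈ graph S a →
    (g, y) ∈ graph S (.of j) → (g', x') ∈ graph S a → (g', y') ∈ graph S (.of j) →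
    x⁻¹ * y = x'⁻¹ * y' → g = g'

lemma graph_mono (h : S ⊆ T) : ∀ a, graph S a ⊆ graph T a
  | .one | .id => subset_rfl
  | .of _ => fun _ hp => h hp

lemma diffs_mono (h : S ⊆ T) (a b : Index G) : diffs S a b ⊆ diffs T a b := by
  rintro _ ⟨g, x, y, hx, hy, rfl⟩
  exact ⟨g, x, y, graph_mono h a hx, graph_mono h b hy, rfl⟩

lemma exists_mem_graph_of_mem_sUnion {c : Set (Set (G × G × G))} (hc : IsChain (· ⊆ ·) c)
    (hS : S ∈ c) {a : Index G} {p : G × G} (hp : p ∈ graph (⋃₀ c) a) :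
    ∃ T ∈ c, S ⊆ T ∧ p ∈ graph T a := by
  cases a with
  | one | id => exact ⟨S, hS, subset_rfl, hp⟩
  | of i =>
    obtain ⟨T, hT, hpT⟩ := hp
    rcases hc.total hS hT with h | h
    · exact ⟨T, hT, h, hpT⟩
    · exact ⟨S, hS, subset_rfl, h hpT⟩

lemma isCoherent_sUnion {c : Set (Set (G × G × G))} (hc : IsChain (· ⊆ ·) c)
    (h : ∀ S ∈ c, IsCoherent S) : IsCoherent (⋃₀ c) where
  functional i g y y' hy hy' := by
    obtain ⟨S, hS, hyS⟩ := hy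
    obtain ⟨T, hT, hST, hy'T⟩ := exists_mem_graph_of_mem_sUnion (a := .of i) hc hS hy'
    exact (h T hT).functional (hST hyS) hy'T
  orthogonal a j g g' x y x' y' ha hx hy hx' hy' heq := by
    obtain ⟨S₀, hS₀, hyS₀⟩ := hy
    obtain ⟨S₁, hS₁, h01, hxS₁⟩ := exists_mem_graph_of_mem_sUnion hc hS₀ hx
    obtain ⟨S₂, hS₂, h12, hx'S₂⟩ := exists_mem_graph_of_mem_sUnion hc hS₁ hx'
    obtain ⟨S₃, hS₃, h23, hy'S₃⟩ := exists_mem_graph_of_mem_sUnion hc hS₂ hy'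
    have h13 := h12.trans h23
    exact (h S₃ hS₃).orthogonal ha (graph_mono h13 a hxS₁)
      (graph_mono ((h01.trans h12).trans h23) (.of j) hyS₀) (graph_mono h23 a hx'S₂) hy'S₃ heq

def blocked (S : Set (G × G × G)) (i g : G) : Set G :=
  {y | ∃ a x, a ≠ .of i ∧ (g, x) ∈ graph S a ∧ x⁻¹ * y ∈ diffs S a (.of i)}

lemma mem_graph_insert {i g y : G} {a : Index G} {p : G × G} :
    p ∈ graph (insert (i, g, y) S) a ↔ p ∈ graph S a ∨ a = .of i ∧ p = (g, y) := by
  cases a <;> simp [graph, or_comm]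

lemma mem_graph_insert_of_ne {i g y : G} {a : Index G} {p : G × G} (hp : p.1 ≠ g) :
    p ∈ graph (insert (i, g, y) S) a ↔ p ∈ graph S a := by
  rw [mem_graph_insert]
  exact or_iff_left (by rintro ⟨-, rfl⟩; exact hp rfl)

theorem IsCoherent.insert (hS : IsCoherent S) {i g y : G} (hg : ∀ z, (i, g, z) ∉ S)
    (hy : y ∉ blocked S i g) : IsCoherent (insert (i, g, y) S) where
  functional i' g' y₁ y₂ h₁ h₂ := by
    rcases h₁ with h₁ | h₁ <;> rcases h₂ with h₂ | h₂
    · simp_all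
    · simp only [Prod.mk.injEq] at h₁; obtain ⟨rfl, rfl, rfl⟩ := h₁; exact (hg _ h₂).elim
    · simp only [Prod.mk.injEq] at h₂; obtain ⟨rfl, rfl, rfl⟩ := h₂; exact (hg _ h₁).elim
    · exact hS.functional h₁ h₂
  orthogonal a j g₁ g₂ x₁ y₁ x₂ y₂ ha hx₁ hy₁ hx₂ hy₂ heq := by
    by_contra hne
    -- at most one of `g₁ ≠ g₂` is the new point `g`
    wlog hg₂ : g₂ ≠ g generalizing g₁ g₂ x₁ y₁ x₂ y₂
    · refine this g₂ g₁ x₂ y₂ x₁ y₁ hx₂ hy₂ hx₁ hy₁ heq.symm (Ne.symm hne) ?_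
      rintro rfl
      exact hne (not_not.1 hg₂).symm
    rw [mem_graph_insert_of_ne hg₂] at hx₂ hy₂
    by_cases hg₁ : g₁ = g
    · subst hg₁
      rw [mem_graph_insert] at hx₁ hy₁
      rcases hx₁ with hx₁ | ⟨rfl, hx₁⟩
      · rcases hy₁ with hy₁ | ⟨hji, hy₁⟩
        · exact hne (hS.orthogonal ha hx₁ hy₁ hx₂ hy₂ heq)
        · simp only [Index.of.injEq, Prod.mk.injEq] at hji hy₁
          obtain ⟨-, rfl⟩ := hy₁
          subst hji
          exact hy ⟨a, x₁, ha, hx₁, g₂, x₂, y₂, hx₂, hy₂, heq.symm⟩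
      · simp only [Prod.mk.injEq] at hx₁
        obtain ⟨-, rfl⟩ := hx₁
        rcases hy₁ with hy₁ | ⟨hji, -⟩
        · refine hy ⟨.of j, y₁, ha.symm, hy₁, g₂, y₂, x₂, hy₂, hx₂, ?_⟩
          rw [← inv_inj]; simpa using heq.symm
        · exact ha hji.symm
    · rw [mem_graph_insert_of_ne hg₁] at hx₁ hy₁
      exact hne (hS.orthogonal ha hx₁ hy₁ hx₂ hy₂ heq)

lemma diffs_insert_subset {i g y j : G} (hg : ∀ z, (j, g, z) ∉ insert (i, g, y) S)
    (a : Index G) : diffs (insert (i, g, y) S) a (.of j) ⊆ diffs S a (.of j) := by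
  rintro _ ⟨g', x, z, hx, hz, rfl⟩
  have hg' : g' ≠ g := by rintro rfl; exact hg z hz
  exact ⟨g', x, z, (mem_graph_insert_of_ne hg').1 hx, (mem_graph_insert_of_ne hg').1 hz, rfl⟩

lemma mk_diffs_le (a : Index G) (j : G) : #(diffs S a (.of j)) ≤ #S * #S := by
  rw [← mk_setProd]
  suffices ∃ f : (G × G × G) × (G × G × G) → G, diffs S a (.of j) ⊆ f '' (S ×ˢ S) by
    obtain ⟨f, hf⟩ := this
    exact (mk_le_mk_of_subset hf).trans mk_image_le
  cases a with
  | one =>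
    refine ⟨fun p => p.2.2.2, ?_⟩
    rintro _ ⟨g, x, y, rfl, hy, rfl⟩
    exact ⟨((j, g, y), (j, g, y)), ⟨hy, hy⟩, by simp⟩
  | id =>
    refine ⟨fun p => p.2.2.1⁻¹ * p.2.2.2, ?_⟩
    rintro _ ⟨g, x, y, hx, hy, rfl⟩
    exact ⟨((j, g, y), (j, g, y)), ⟨hy, hy⟩, by rw [show x = g from hx]⟩
  | of i =>
    refine ⟨fun p => p.1.2.2⁻¹ * p.2.2.2, ?_⟩
    rintro _ ⟨g, x, y, hx, hy, rfl⟩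
    exact ⟨((i, g, x), (j, g, y)), ⟨hx, hy⟩, rfl⟩

def valuesAt (S : Set (G × G × G)) (g : G) : Set (Index G × G) :=
  {p | (g, p.2) ∈ graph S p.1}

lemma blocked_subset (i g : G) :
    blocked S i g ⊆ ⋃ p ∈ valuesAt S g, (p.2 * ·) '' diffs S p.1 (.of i) := by
  rintro y ⟨a, x, -, hx, hd⟩
  exact mem_biUnion (x := (a, x)) hx ⟨_, hd, mul_inv_cancel_left x y⟩

lemma blocked_subset_of_fresh {j g : G} (hg : ∀ i y, (i, g, y) ∉ S) :
    blocked S j g ⊆ diffs S .one (.of j) ∪ (g * ·) '' diffs S .id (.of j) := by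
  rintro y ⟨a, x, -, hx, hd⟩
  cases a with
  | one => left; rwa [show x = 1 from hx, inv_one, one_mul] at hd
  | id => right; exact ⟨_, hd, by rw [show x = g from hx]; exact mul_inv_cancel_left g y⟩
  | of i => exact (hg i x hx).elim

section Infinite

variable [Infinite G]

lemma mk_diffs_lt (hS : #S < #G) (a : Index G) (j : G) : #(diffs S a (.of j)) < #G :=
  (mk_diffs_le a j).trans_lt (mul_lt_of_lt (aleph0_le_mk G) hS hS)

lemma mk_valuesAt_lt (hS : #S < #G) (g : G) : #(valuesAt S g) < #G := by
  have hsub : valuesAt S g ⊆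
      {(.one, 1), (.id, g)} ∪ (fun t => (.of t.1, t.2.2)) '' S := by
    rintro ⟨a, x⟩ h
    cases a with
    | one => left; simp [show x = 1 from h]
    | id => left; simp [show x = g from h]
    | of i => right; exact ⟨(i, g, x), h, rfl⟩
  refine (mk_le_mk_of_subset hsub).trans_lt ((mk_union_le _ _).trans_lt
    (add_lt_of_lt (aleph0_le_mk G) ?_ (mk_image_le.trans_lt hS)))
  exact (toFinite _).lt_aleph0.trans_le (aleph0_le_mk G)

lemma mk_blocked_lt (hS : #S < #G) (i g : G) : #(blocked S i g) < #G :=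
  calc #(blocked S i g) ≤ _ := mk_le_mk_of_subset (blocked_subset i g)
    _ ≤ _ := mk_biUnion_le _ _
    _ < #G := mul_lt_of_lt (aleph0_le_mk G) (mk_valuesAt_lt hS g)
      ((ciSup_le' fun _ => mk_image_le.trans (mk_diffs_le _ _)).trans_lt
        (mul_lt_of_lt (aleph0_le_mk G) hS hS))

theorem exists_isCoherent_insert (hS : IsCoherent S) (hcard : #S < #G) {i g : G}
    (hg : ∀ z, (i, g, z) ∉ S) {A : Set G} (hA : #A < #G) :
    ∃ y ∉ A, IsCoherent (insert (i, g, y) S) := by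
  obtain ⟨y, hyA, hy⟩ := exists_notMem_union_of_mk_lt hA (mk_blocked_lt hcard i g)
  exact ⟨y, hyA, hS.insert hg hy⟩

theorem exists_extend_mem_dom (hS : IsCoherent S) (hcard : #S < #G) {i g : G}
    (h : ∀ y, (i, g, y) ∉ S) :
    ∃ t : Set (G × G × G), t.Finite ∧ IsCoherent (S ∪ t) ∧ ∃ y, (i, g, y) ∈ S ∪ t := by
  obtain ⟨y, -, hy⟩ := exists_isCoherent_insert hS hcard h (A := ∅) (by simp [pos_iff_ne_zero])
  exact ⟨{(i, g, y)}, finite_singleton _, by rwa [union_singleton], y, by simp⟩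

theorem exists_extend_diffs_of (hS : IsCoherent S) (hcard : #S < #G) {i j w : G} (hij : i ≠ j)
    (hw : w ∉ diffs S (.of i) (.of j)) :
    ∃ t : Set (G × G × G), t.Finite ∧ IsCoherent (S ∪ t) ∧ w ∈ diffs (S ∪ t) (.of i) (.of j) := by
  obtain ⟨g, -, hg⟩ := exists_fresh hcard (A := ∅) (by simp [pos_iff_ne_zero])
  obtain ⟨y, hyA, hS₁⟩ := exists_isCoherent_insert hS hcard (hg i)
    (A := (· * w⁻¹) '' blocked S j g) (mk_image_le.trans_lt (mk_blocked_lt hcard j g))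
  have hg₁ : ∀ z, (j, g, z) ∉ insert (i, g, y) S := by
    rintro z (h | h)
    · exact hij (Prod.ext_iff.1 h).1.symm
    · exact hg j z h
  have hyw : y * w ∉ blocked (insert (i, g, y) S) j g := by
    rintro ⟨a, x, ha, hx, hd⟩
    replace hd := diffs_insert_subset hg₁ a hd
    rcases mem_graph_insert.1 hx with hx | ⟨rfl, hxy⟩
    · exact hyA ⟨y * w, ⟨a, x, ha, hx, hd⟩, mul_inv_cancel_right y w⟩
    · obtain rfl : x = y := (Prod.ext_iff.1 hxy).2
      rw [inv_mul_cancel_left] at hd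
      exact hw hd
  refine ⟨{(j, g, y * w), (i, g, y)}, toFinite _, ?_, ?_⟩ <;> rw [union_insert, union_singleton]
  · exact hS₁.insert hg₁ hyw
  · exact ⟨g, y, y * w, Or.inr (Or.inl rfl), Or.inl rfl, inv_mul_cancel_left y w⟩

theorem exists_extend_diffs_one (hS : IsCoherent S) (hcard : #S < #G) {j w : G}
    (hw : w ∉ diffs S .one (.of j)) :
    ∃ t : Set (G × G × G), t.Finite ∧ IsCoherent (S ∪ t) ∧ w ∈ diffs (S ∪ t) .one (.of j) := by
  obtain ⟨g, hgA, hg⟩ := exists_fresh hcard (A := (fun d => w * d⁻¹) '' diffs S .id (.of j))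
    (mk_image_le.trans_lt (mk_diffs_lt hcard _ _))
  have hw' : w ∉ blocked S j g := by
    intro h
    rcases blocked_subset_of_fresh hg h with h | ⟨d, hd, hdw⟩
    · exact hw h
    · exact hgA ⟨d, hd, by rw [← hdw]; exact mul_inv_cancel_right g d⟩
  refine ⟨{(j, g, w)}, finite_singleton _, ?_, ?_⟩ <;> rw [union_singleton]
  · exact hS.insert (hg j) hw'
  · exact ⟨g, 1, w, rfl, Or.inl rfl, by rw [inv_one, one_mul]⟩

theorem exists_extend_diffs_id (hS : IsCoherent S) (hcard : #S < #G) {j w : G}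
    (hw : w ∉ diffs S .id (.of j)) :
    ∃ t : Set (G × G × G), t.Finite ∧ IsCoherent (S ∪ t) ∧ w ∈ diffs (S ∪ t) .id (.of j) := by
  obtain ⟨g, hgA, hg⟩ := exists_fresh hcard (A := (· * w⁻¹) '' diffs S .one (.of j))
    (mk_image_le.trans_lt (mk_diffs_lt hcard _ _))
  have hw' : g * w ∉ blocked S j g := by
    intro h
    rcases blocked_subset_of_fresh hg h with h | ⟨d, hd, hdw⟩
    · exact hgA ⟨g * w, h, mul_inv_cancel_right g w⟩
    · exact hw (by rwa [mul_left_cancel hdw] at hd)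
  refine ⟨{(j, g, g * w)}, finite_singleton _, ?_, ?_⟩ <;> rw [union_singleton]
  · exact hS.insert (hg j) hw'
  · exact ⟨g, g, g * w, rfl, Or.inl rfl, inv_mul_cancel_left g w⟩

end Infinite

def Satisfies (S : Set (G × G × G)) : Requirement G → Prop
  | .inl (i, g) => ∃ y, (i, g, y) ∈ S
  | .inr (a, j, w) => a ≠ .of j → w ∈ diffs S a (.of j)

lemma satisfies_mono (r : Requirement G) : Monotone fun S => Satisfies S r := by
  intro S T h
  rcases r with ⟨i, g⟩ | ⟨a, j, w⟩
  · exact fun ⟨y, hy⟩ => ⟨y, h hy⟩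
  · exact fun hw ha => diffs_mono h a _ (hw ha)

theorem exists_extend_satisfies [Infinite G] (hS : IsCoherent S) (hcard : #S < #G)
    (r : Requirement G) :
    ∃ t : Set (G × G × G), t.Finite ∧ IsCoherent (S ∪ t) ∧ Satisfies (S ∪ t) r := by
  by_cases hr : Satisfies S r
  · exact ⟨∅, finite_empty, by rwa [union_empty], by rwa [union_empty]⟩
  rcases r with ⟨i, g⟩ | ⟨a, j, w⟩
  · exact exists_extend_mem_dom hS hcard (by simpa [Satisfies] using hr)
  simp only [Satisfies, Classical.not_imp] at hr
  obtain ⟨ha, hw⟩ := hr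
  suffices ∃ t : Set (G × G × G), t.Finite ∧ IsCoherent (S ∪ t) ∧ w ∈ diffs (S ∪ t) a (.of j)
    from
    this.imp fun t ⟨ht, hSt, hw⟩ => ⟨ht, hSt, fun _ => hw⟩
  cases a with
  | one => exact exists_extend_diffs_one hS hcard hw
  | id => exact exists_extend_diffs_id hS hcard hw
  | of i => exact exists_extend_diffs_of hS hcard (fun h => ha (h ▸ rfl)) hw

def Index.eval (θ : G → G → G) : Index G → G → G
  | .one => fun _ => 1
  | .id => fun g => g
  | .of i => θ i

theorem exists_bijective_of_forall_satisfies {T : Set (G × G × G)} (hT : IsCoherent T)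
    (hsat : ∀ r, Satisfies T r) :
    ∃ θ : G → G → G,
      ∀ (a : Index G) j, a ≠ .of j → Function.Bijective fun g => (a.eval θ g)⁻¹ * θ j g := by
  have htot : ∀ i g, ∃ y, (i, g, y) ∈ T := fun i g => hsat (.inl (i, g))
  choose θ hθ using htot
  have mem : ∀ (a : Index G) g, (g, a.eval θ g) ∈ graph T a := by
    rintro (_ | _ | i) g
    · rfl
    · rfl
    · exact hθ i g
  have eq_of_mem : ∀ (a : Index G) g x, (g, x) ∈ graph T a → x = a.eval θ g := by
    rintro (_ | _ | i) g x hx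
    · exact hx
    · exact hx
    · exact hT.functional hx (hθ i g)
  refine ⟨θ, fun a j ha => ⟨fun g g' h => ?_, fun w => ?_⟩⟩
  · exact hT.orthogonal ha (mem a g) (mem (.of j) g) (mem a g') (mem (.of j) g') h
  · obtain ⟨g, x, y, hx, hy, rfl⟩ := hsat (.inr (a, j, w)) ha
    exact ⟨g, by rw [eq_of_mem a g x hx, eq_of_mem (.of j) g y hy]; rfl⟩

end OrthFamily

open OrthFamily in
theorem stmt_16 {G : Type*} [Group G] [Infinite G] :
    ∃ θ : G → G → G,
      (∀ i, Function.Bijective (θ i)) ∧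
      (∀ i, Function.Bijective (fun g => g⁻¹ * θ i g)) ∧
      (∀ i j, i ≠ j → Function.Bijective (fun g => (θ i g)⁻¹ * θ j g)) := by
  obtain ⟨T, hT, hsat⟩ := exists_forall_of_finite_extension (aleph0_le_mk G)
    mk_requirement.le (fun _ => isCoherent_sUnion) satisfies_mono
    (fun r _ hS hcard => exists_extend_satisfies hS hcard r)
  obtain ⟨θ, hθ⟩ := exists_bijective_of_forall_satisfies hT hsat
  refine ⟨θ, fun i => ?_, fun i => hθ .id i (by simp), fun i j hij => hθ (.of i) j (by simpa)⟩
  simpa [Index.eval] using hθ .one i (by simp)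
end

section
/- Every infinite group G that is squareful (i.e., the set {g² : g ∈ G} has the same cardinality as G) has a strong complete mapping: a bijection θ : G → G such that g ↦ g⁻¹·θ(g) and g ↦ g·θ(g) are both bijections. -/
/-!
Encode a strong complete mapping θ by its graph P ⊆ G × G: θ exists iff the four maps
(a, b) ↦ a, b, a⁻¹b, ab are all bijections from P onto G. Such a P is built by a transfinite
greedy construction of length #G: at each stage the set built so far has fewer than #G points,
and one fresh point is added that puts a prescribed element into the image of a prescribed
coordinate without breaking injectivity. For the coordinates a and b the fresh point only has
to avoid fewer than #G values; for a⁻¹b = y and ab = y the other coordinate is determined by a,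
and the constraint from the fourth coordinate is a condition on a², which squarefulness lets us
satisfy.
-/

open Cardinal Set Function

universe u w

section TransfiniteRecursion

variable {T X : Type*} [LinearOrder T]

theorem injOn_image_of_forall_injOn_image_Iic {Y : Type*} {g : X → Y} {x : T → X} {s : Set T}
    (h : ∀ j ∈ s, InjOn g (x '' Iic j)) : InjOn g (x '' s) := by
  rintro _ ⟨j₁, hj₁, rfl⟩ _ ⟨j₂, hj₂, rfl⟩ heq
  rcases le_total j₁ j₂ with hle | hle
  · exact h j₂ hj₂ (mem_image_of_mem x hle) (mem_image_of_mem x le_rfl) heq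
  · exact h j₁ hj₁ (mem_image_of_mem x le_rfl) (mem_image_of_mem x hle) heq

variable [WellFoundedLT T]

noncomputable def greedySeq (next : Set X → T → X) : T → X :=
  WellFoundedLT.fix fun k rec ↦ next (range fun j : Iio k ↦ rec j j.2) k

theorem greedySeq_eq (next : Set X → T → X) (k : T) :
    greedySeq next k = next (greedySeq next '' Iio k) k := by
  rw [greedySeq, WellFoundedLT.fix_eq, image_eq_range]

end TransfiniteRecursion

theorem exists_bijOn_of_exists_insert {n : ℕ} {X Y : Type u} [Nonempty X] [Infinite Y]
    (f : Fin n → X → Y)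
    (hext : ∀ P : Set X, (∀ i, InjOn (f i) P) → #P < #Y → ∀ i y,
      ∃ x, (∀ i, InjOn (f i) (insert x P)) ∧ y ∈ f i '' insert x P) :
    ∃ P : Set X, ∀ i, BijOn (f i) P univ := by
  -- Well-order the tasks `(i, y)` so that every proper initial segment has fewer than `#Y`
  -- elements.
  obtain ⟨_, _, hord⟩ := exists_ord_eq_type_lt (Fin n × Y)
  have hcard : #(Fin n × Y) ≤ #Y := by
    rw [mk_prod, mk_fin, lift_natCast, lift_uzero]
    have hY := aleph0_le_mk Y
    exact mul_le_of_le hY ((natCast_lt_aleph0 (n := n)).le.trans hY) le_rfl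
  let x := greedySeq fun P (t : Fin n × Y) ↦ Classical.epsilon fun x ↦
    (∀ i, InjOn (f i) (insert x P)) ∧ t.2 ∈ f t.1 '' insert x P
  have hstep : ∀ k, (∀ i, InjOn (f i) (x '' Iio k)) →
      (∀ i, InjOn (f i) (x '' Iic k)) ∧ k.2 ∈ f k.1 '' (x '' Iic k) := by
    intro k hk
    rw [← Iio_insert, image_insert_eq, show x k = _ from greedySeq_eq _ k]
    exact Classical.epsilon_spec
      (hext _ hk (mk_image_le.trans_lt ((mk_Iio_lt k hord).trans_le hcard)) k.1 k.2)
  have hinj : ∀ k i, InjOn (f i) (x '' Iio k) := by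
    intro k
    induction k using WellFoundedLT.induction with
    | _ k ih =>
      exact fun i ↦ injOn_image_of_forall_injOn_image_Iic fun j hj ↦ (hstep j (ih j hj)).1 i
  refine ⟨range x, fun i ↦ ⟨mapsTo_univ _ _, ?_, fun y _ ↦ ?_⟩⟩
  · rw [← image_univ]
    exact injOn_image_of_forall_injOn_image_Iic fun j _ ↦ (hstep j (hinj j)).1 i
  · exact image_mono (image_subset_range x _) (hstep (i, y) (hinj _)).2

theorem exists_bijective_of_bijOn_fst {X Y : Type*} {P : Set (X × Y)}
    (hfst : BijOn Prod.fst P univ) :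
    ∃ θ : X → Y, ∀ {Z : Type w} (g : X × Y → Z), BijOn g P univ →
      Bijective fun x ↦ g (x, θ x) := by
  have hgraph : ∀ x, ∃ y, (x, y) ∈ P := fun x ↦
    let ⟨p, hp, hpx⟩ := hfst.surjOn (mem_univ x)
    ⟨p.2, hpx ▸ hp⟩
  choose θ hθ using hgraph
  refine ⟨θ, fun g hg ↦ ⟨fun x x' h ↦ ?_, fun z ↦ ?_⟩⟩
  · exact congrArg Prod.fst (hg.injOn (hθ x) (hθ x') h)
  · obtain ⟨p, hp, rfl⟩ := hg.surjOn (mem_univ z)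
    exact ⟨p.1, congrArg g (hfst.injOn (hθ p.1) hp rfl)⟩

theorem Cardinal.mk_union_lt {α : Type*} [Infinite α] {s t : Set α} (hs : #s < #α)
    (ht : #t < #α) : #(s ∪ t : Set α) < #α :=
  (mk_union_le s t).trans_lt (add_lt_of_lt (aleph0_le_mk α) hs ht)

theorem Cardinal.mk_preimage_lt {α : Type*} {f : α → α} (hf : Injective f) {s : Set α}
    (hs : #s < #α) : #(f ⁻¹' s) < #α :=
  (mk_preimage_of_injective f s hf).trans_lt hs

section StrongCompleteMapping

variable {G : Type*} [Group G]

theorem exists_notMem_sq_notMem [Infinite G] (hsq : #(range fun g : G ↦ g ^ 2) = #G)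
    {S T : Set G} (hS : #S < #G) (hT : #T < #G) : ∃ a, a ∉ T ∧ a ^ 2 ∉ S := by
  obtain ⟨_, ⟨a, rfl⟩, ha⟩ := sdiff_nonempty_of_mk_lt_mk (S := S ∪ (· ^ 2) '' T)
    (T := range fun g : G ↦ g ^ 2) (hsq ▸ mk_union_lt hS (mk_image_le.trans_lt hT))
  simp only [mem_union, not_or] at ha
  exact ⟨a, fun h ↦ ha.2 (mem_image_of_mem _ h), ha.1⟩

def scmCoord : Fin 4 → G × G → G :=
  ![Prod.fst, Prod.snd, fun p ↦ p.1⁻¹ * p.2, fun p ↦ p.1 * p.2]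

theorem exists_scmCoord_eq_forall_notMem [Infinite G] (hsq : #(range fun g : G ↦ g ^ 2) = #G)
    {P : Set (G × G)} (hP : #P < #G) {i : Fin 4} {y : G} (hy : y ∉ scmCoord i '' P) :
    ∃ p, scmCoord i p = y ∧ ∀ j, scmCoord j p ∉ scmCoord j '' P := by
  have hA : ∀ j, #(scmCoord j '' P) < #G := fun j ↦ mk_image_le.trans_lt hP
  have hinv : Injective fun a : G ↦ a⁻¹ * y := (mul_left_injective y).comp inv_injective
  fin_cases i
  · obtain ⟨b, hb⟩ := compl_nonempty_of_mk_lt_mk <| mk_union_lt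
      (mk_union_lt (hA 1) (mk_preimage_lt (mul_right_injective y⁻¹) (hA 2)))
      (mk_preimage_lt (mul_right_injective y) (hA 3))
    simp only [mem_compl_iff, mem_union, mem_preimage, not_or] at hb
    obtain ⟨⟨hb₁, hb₂⟩, hb₃⟩ := hb
    refine ⟨(y, b), rfl, fun j ↦ ?_⟩
    fin_cases j
    exacts [hy, hb₁, hb₂, hb₃]
  · obtain ⟨a, ha⟩ := compl_nonempty_of_mk_lt_mk <| mk_union_lt (mk_union_lt (hA 0)
      (mk_preimage_lt hinv (hA 2))) (mk_preimage_lt (mul_left_injective y) (hA 3))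
    simp only [mem_compl_iff, mem_union, mem_preimage, not_or] at ha
    obtain ⟨⟨ha₀, ha₂⟩, ha₃⟩ := ha
    refine ⟨(a, y), rfl, fun j ↦ ?_⟩
    fin_cases j
    exacts [ha₀, hy, ha₂, ha₃]
  · obtain ⟨a, ha, ha₃⟩ := exists_notMem_sq_notMem hsq
      (mk_preimage_lt (mul_left_injective y) (hA 3))
      (mk_union_lt (hA 0) (mk_preimage_lt (mul_left_injective y) (hA 1)))
    simp only [mem_union, mem_preimage, not_or] at ha ha₃
    obtain ⟨ha₀, ha₁⟩ := ha
    refine ⟨(a, a * y), inv_mul_cancel_left a y, fun j ↦ ?_⟩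
    fin_cases j
    · exact ha₀
    · exact ha₁
    · simpa [scmCoord] using hy
    · simpa [scmCoord, sq, mul_assoc] using ha₃
  · obtain ⟨a, ha, ha₂⟩ := exists_notMem_sq_notMem hsq
      (mk_preimage_lt (f := fun c : G ↦ c⁻¹ * y) hinv (hA 2))
      (mk_union_lt (hA 0) (mk_preimage_lt hinv (hA 1)))
    simp only [mem_union, mem_preimage, not_or] at ha ha₂
    obtain ⟨ha₀, ha₁⟩ := ha
    refine ⟨(a, a⁻¹ * y), mul_inv_cancel_left a y, fun j ↦ ?_⟩
    fin_cases j
    · exact ha₀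
    · exact ha₁
    · simpa [scmCoord, sq, mul_assoc] using ha₂
    · simpa [scmCoord] using hy

theorem exists_injOn_insert_scmCoord [Infinite G] (hsq : #(range fun g : G ↦ g ^ 2) = #G)
    {P : Set (G × G)} (hP : ∀ i, InjOn (scmCoord i) P) (hsmall : #P < #G) (i : Fin 4)
    (y : G) :
    ∃ p, (∀ j, InjOn (scmCoord j) (insert p P)) ∧ y ∈ scmCoord i '' insert p P := by
  by_cases hy : y ∈ scmCoord i '' P
  · obtain ⟨p, hp, -⟩ := id hy
    refine ⟨p, ?_⟩
    rw [insert_eq_of_mem hp]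
    exact ⟨hP, hy⟩
  · obtain ⟨p, rfl, hfresh⟩ := exists_scmCoord_eq_forall_notMem hsq hsmall hy
    have hpP : p ∉ P := fun h ↦ hfresh 0 (mem_image_of_mem _ h)
    exact ⟨p, fun j ↦ (injOn_insert hpP).2 ⟨hP j, hfresh j⟩,
      mem_image_of_mem _ (mem_insert p P)⟩

end StrongCompleteMapping

theorem stmt_17 {G : Type*} [Group G] [Infinite G]
    (hsq : Cardinal.mk (Set.range fun g : G => g ^ 2) = Cardinal.mk G) :
    ∃ θ : G → G, Function.Bijective θ ∧
      Function.Bijective (fun g => g⁻¹ * θ g) ∧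
      Function.Bijective (fun g => g * θ g) := by
  obtain ⟨P, hP⟩ := exists_bijOn_of_exists_insert scmCoord fun _ hP hsmall ↦
    exists_injOn_insert_scmCoord hsq hP hsmall
  obtain ⟨θ, hθ⟩ := exists_bijective_of_bijOn_fst (hP 0)
  exact ⟨θ, hθ _ (hP 1), hθ _ (hP 2), hθ _ (hP 3)⟩
end

section
/- For every infinite cardinal κ there exists a Knut Vic design of order κ: an abelian group A of cardinality κ and a function L : A × A → A such that every row, every column, every left diagonal i ↦ L(i, k+i), and every right diagonal i ↦ L(i, k−i) is a bijection A → A. -/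
/-!
If `θ : A → A` is a strong complete mapping, i.e. `θ`, `x ↦ x + θ x` and `x ↦ θ x - x` are all
bijections, then `L i j = i + θ j` is a Knut Vic design: after the substitution `m = k + i`
(resp. `m = k - i`) the left (resp. right) diagonals become translates of the last two maps.
On a vector space over `ZMod 5` of dimension `κ`, multiplication by `2` is such a mapping, since
`2`, `3` and `1` are units.
-/

universe u

/-- A Knut Vic design on an abelian group `A`: every row, column, left diagonal and
right diagonal of `L` is a bijection. -/
def IsKnutVic {A : Type*} [AddCommGroup A] (L : A → A → A) : Prop :=
  (∀ i, Function.Bijective (fun j => L i j)) ∧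
  (∀ j, Function.Bijective (fun i => L i j)) ∧
  (∀ k, Function.Bijective (fun i => L i (k + i))) ∧
  (∀ k, Function.Bijective (fun i => L i (k - i)))

open Cardinal Function

theorem isKnutVic_add_of_strongCompleteMapping {A : Type*} [AddCommGroup A] {θ : A → A}
    (hθ : Bijective θ) (hadd : Bijective fun x => x + θ x) (hsub : Bijective fun x => θ x - x) :
    IsKnutVic fun i j => i + θ j := by
  refine ⟨fun i => (Equiv.addLeft i).bijective.comp hθ,
    fun j => (Equiv.addRight (θ j)).bijective, fun k => ?_, fun k => ?_⟩
  · have hdiag : (fun i => i + θ (k + i)) = (· - k) ∘ (fun x => x + θ x) ∘ (k + ·) := by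
      funext i; simp only [comp_apply]; abel
    rw [hdiag]
    exact (Equiv.subRight k).bijective.comp (hadd.comp (Equiv.addLeft k).bijective)
  · have hdiag : (fun i => i + θ (k - i)) = (· + k) ∘ (fun x => θ x - x) ∘ (k - ·) := by
      funext i; simp only [comp_apply]; abel
    rw [hdiag]
    exact (Equiv.addRight k).bijective.comp (hsub.comp (Equiv.subLeft k).bijective)

theorem isKnutVic_add_smul {R M : Type*} [Ring R] [AddCommGroup M] [Module R M] {c : R}
    (hc : IsUnit c) (hc_add : IsUnit (1 + c)) (hc_sub : IsUnit (c - 1)) :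
    IsKnutVic fun i j : M => i + c • j := by
  refine isKnutVic_add_of_strongCompleteMapping hc.smul_bijective ?_ ?_
  · simpa only [add_smul, one_smul] using hc_add.smul_bijective (β := M)
  · simpa only [sub_smul, one_smul] using hc_sub.smul_bijective (β := M)

theorem mk_finsupp_of_infinite_of_countable (ι : Type u) (β : Type) [Infinite ι] [Zero β]
    [Nontrivial β] [Countable β] : #(ι →₀ β) = #ι := by
  rw [mk_finsupp_lift_of_infinite, lift_id', max_eq_left]
  exact (lift_le_aleph0.2 mk_le_aleph0).trans (aleph0_le_mk ι)

theorem stmt_18 (κ : Cardinal.{u}) (hκ : Cardinal.aleph0 ≤ κ) :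
    ∃ (A : Type u) (inst : AddCommGroup A) (L : A → A → A),
      Cardinal.mk A = κ ∧ @IsKnutVic A inst L := by
  obtain ⟨ι, rfl⟩ : ∃ ι : Type u, #ι = κ := ⟨κ.out, mk_out κ⟩
  have : Infinite ι := infinite_iff.2 hκ
  have : Fact (1 < 5) := ⟨by norm_num⟩
  have h2 : IsUnit (2 : ZMod 5) := IsUnit.of_mul_eq_one 3 (by decide)
  have h2_add : IsUnit (1 + 2 : ZMod 5) := IsUnit.of_mul_eq_one 2 (by decide)
  have h2_sub : IsUnit (2 - 1 : ZMod 5) := IsUnit.of_mul_eq_one 1 (by decide)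
  exact ⟨ι →₀ ZMod 5, inferInstance, fun i j => i + (2 : ZMod 5) • j,
    mk_finsupp_of_infinite_of_countable ι (ZMod 5), isKnutVic_add_smul h2 h2_add h2_sub⟩
end
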